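/- Let a₁, a₂ be integers with 2 ≤ a₁ < a₂. In the Artin braid group B_{a₂}, the element H(a₁,a₂) := ρ(G(a₂ - a₁ - 1)) commutes with each of e(a₁), o(a₁), and G(a₁ - 2). -/

import Mathlib

/-- The braid relations for the Artin braid group `B_n`, as a set of elements
of the free group on generators `σ_1, …, σ_{n-1}` (indexed by `Fin (n-1)`,
where the index `i : Fin (n-1)` corresponds to the generator `σ_{i+1}`). -/
def braidRels (n : ℕ) : Set (FreeGroup (Fin (n - 1))) :=
  {r | ∃ i j : Fin (n - 1), (j : ℕ) = (i : ℕ) + 1 ∧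
      r = FreeGroup.of i * FreeGroup.of j * FreeGroup.of i *
          (FreeGroup.of j * FreeGroup.of i * FreeGroup.of j)⁻¹} ∪
  {r | ∃ i j : Fin (n - 1), (i : ℕ) + 2 ≤ (j : ℕ) ∧
      r = FreeGroup.of i * FreeGroup.of j * (FreeGroup.of j * FreeGroup.of i)⁻¹}

/-- The Artin braid group `B_n`. -/
abbrev BraidGroup (n : ℕ) := PresentedGroup (braidRels n)

/-- The generator `σ_i` of `B_n`, for `1 ≤ i ≤ n - 1` (junk value `1` otherwise). -/
def σ (n i : ℕ) : BraidGroup n :=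
  if h : 1 ≤ i ∧ i ≤ n - 1 then PresentedGroup.of (⟨i - 1, by omega⟩ : Fin (n - 1)) else 1

/-- `W n m` is the element `W(m) = σ_{m-1} σ_{m-2} ⋯ σ_1` of `B_n`, with `W(1) = 1`. -/
def W (n : ℕ) : ℕ → BraidGroup n
  | 0 => 1
  | m + 1 => σ n m * W n m

/-- `eB m k` is the product `e(k)` of the generators `σ_i` of `B_m` over even `i`
with `2 ≤ i < k` (the factors commute, so the order is irrelevant; note `σ m 0 = 1`). -/
def eB (m k : ℕ) : BraidGroup m :=
  (((List.range k).filter (fun i => i % 2 = 0)).map (σ m)).prod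

/-- `oB m k` is the product `o(k)` of the generators `σ_i` of `B_m` over odd `i`
with `1 ≤ i < k` (the factors commute, so the order is irrelevant). -/
def oB (m k : ℕ) : BraidGroup m :=
  (((List.range k).filter (fun i => i % 2 = 1)).map (σ m)).prod

/-- The elements `G(k)` of `B_m`: `G(0) = G(1) = 1`, and for `k ≥ 2`,
`G(k) = e(k+1) o(k) G(k-2)` if `k` is odd, `G(k) = o(k+1) e(k) G(k-2)` if `k` is even. -/
def G (m : ℕ) : ℕ → BraidGroup m
  | 0 => 1
  | 1 => 1
  | k + 2 => if (k + 2) % 2 = 1 then eB m (k + 3) * oB m (k + 2) * G m k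
             else oB m (k + 3) * eB m (k + 2) * G m k

/-!
`G(t)` is a positive word in `σ_1, …, σ_t`, so `H(a₁,a₂) = ρ(G(a₂ - a₁ - 1))` is a positive word in
`σ_{a₁+1}, …, σ_{a₂-1}`, while `e(a₁)`, `o(a₁)` and `G(a₁ - 2)` are positive words in
`σ_1, …, σ_{a₁-1}`. The two alphabets are at distance at least two, so every letter of the first
commutes with every letter of the second by the far commutation relations.
-/

open Submonoid
open Set (Ico Icc image_mono mem_image_of_mem)

lemma σ_zero (n : ℕ) : σ n 0 = 1 := by simp [σ]

lemma commute_σ_of_add_two_le {n i j : ℕ} (hij : i + 2 ≤ j) : Commute (σ n i) (σ n j) := by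
  unfold σ
  by_cases hi : 1 ≤ i ∧ i ≤ n - 1
  · by_cases hj : 1 ≤ j ∧ j ≤ n - 1
    · rw [dif_pos hi, dif_pos hj]
      have := PresentedGroup.mk_eq_mk_of_mul_inv_mem (rels := braidRels n)
        (Or.inr ⟨⟨i - 1, by omega⟩, ⟨j - 1, by omega⟩, by simp only; omega, rfl⟩)
      rwa [map_mul, map_mul] at this
    · rw [dif_neg hj]; exact Commute.one_right _
  · rw [dif_neg hi]; exact Commute.one_left _

section Monoid

variable {M N : Type*} [Monoid M] [Monoid N]

lemma commute_of_mem_closure {s t : Set M} (hst : ∀ a ∈ s, ∀ b ∈ t, Commute a b) {x y : M}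
    (hx : x ∈ closure s) (hy : y ∈ closure t) : Commute x y := by
  have hs : closure s ≤ centralizer t :=
    closure_le.mpr fun a ha => mem_centralizer_iff.mpr fun b hb => (hst a ha b hb).symm
  have ht : closure t ≤ centralizer (closure s) :=
    closure_le.mpr fun b hb => mem_centralizer_iff.mpr fun a ha =>
      (mem_centralizer_iff.mp (hs ha) b hb).symm
  exact mem_centralizer_iff.mp (ht hy) x hx

lemma mem_closure_image_of_antihom (f : M → N) (hmul : ∀ x y, f (x * y) = f y * f x)
    (hone : f 1 = 1) {s : Set M} {x : M} (hx : x ∈ closure s) : f x ∈ closure (f '' s) := by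
  induction hx using closure_induction with
  | mem a ha => exact subset_closure (mem_image_of_mem f ha)
  | one => exact hone ▸ one_mem _
  | mul a b _ _ ha hb => exact hmul a b ▸ mul_mem hb ha

end Monoid

lemma list_prod_map_σ_mem_closure {n : ℕ} {s : Set ℕ} {L : List ℕ}
    (hL : ∀ i ∈ L, i ≠ 0 → i ∈ s) : (L.map (σ n)).prod ∈ closure (σ n '' s) := by
  refine list_prod_mem fun x hx => ?_
  obtain ⟨i, hi, rfl⟩ := List.mem_map.mp hx
  rcases eq_or_ne i 0 with rfl | hi0
  · exact σ_zero n ▸ one_mem _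
  · exact subset_closure (mem_image_of_mem _ (hL i hi hi0))

lemma eB_mem_closure (n k : ℕ) : eB n k ∈ closure (σ n '' Ico 1 k) :=
  list_prod_map_σ_mem_closure fun i hi hi0 => by
    simp only [List.mem_filter, List.mem_range] at hi
    exact ⟨Nat.one_le_iff_ne_zero.mpr hi0, hi.1⟩

lemma oB_mem_closure (n k : ℕ) : oB n k ∈ closure (σ n '' Ico 1 k) :=
  list_prod_map_σ_mem_closure fun i hi hi0 => by
    simp only [List.mem_filter, List.mem_range] at hi
    exact ⟨Nat.one_le_iff_ne_zero.mpr hi0, hi.1⟩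

lemma G_mem_closure (n : ℕ) : ∀ t, G n t ∈ closure (σ n '' Icc 1 t)
  | 0 | 1 => one_mem _
  | t + 2 => by
    have mem {s : Set ℕ} (hs : s ⊆ Icc 1 (t + 2)) {x} (hx : x ∈ closure (σ n '' s)) :
        x ∈ closure (σ n '' Icc 1 (t + 2)) :=
      closure_mono (image_mono hs) hx
    have hIco {k} (hk : k ≤ t + 3) : Ico 1 k ⊆ Icc 1 (t + 2) := fun i hi => by
      simp only [Set.mem_Ico, Set.mem_Icc] at hi ⊢; omega
    have hG : G n t ∈ closure (σ n '' Icc 1 (t + 2)) :=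
      mem (Set.Icc_subset_Icc_right (by omega)) (G_mem_closure n t)
    rw [G]
    split
    · exact mul_mem (mul_mem (mem (hIco le_rfl) (eB_mem_closure n _))
        (mem (hIco (by omega)) (oB_mem_closure n _))) hG
    · exact mul_mem (mul_mem (mem (hIco le_rfl) (oB_mem_closure n _))
        (mem (hIco (by omega)) (eB_mem_closure n _))) hG

lemma commute_of_mem_closure_σ {n : ℕ} {s t : Set ℕ} (hst : ∀ i ∈ s, ∀ j ∈ t, i + 2 ≤ j)
    {x y : BraidGroup n} (hx : x ∈ closure (σ n '' s)) (hy : y ∈ closure (σ n '' t)) :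
    Commute x y :=
  commute_of_mem_closure (by
    rintro _ ⟨i, hi, rfl⟩ _ ⟨j, hj, rfl⟩
    exact commute_σ_of_add_two_le (hst i hi j hj)) hx hy

theorem H_commutes_general (a₁ a₂ : ℕ)
    (ρ : BraidGroup a₂ → BraidGroup a₂)
    (hmul : ∀ x y, ρ (x * y) = ρ y * ρ x) (hone : ρ 1 = 1)
    (hσ : ∀ i, 1 ≤ i → i ≤ a₂ - 1 → ρ (σ a₂ i) = σ a₂ (a₂ - i)) :
    Commute (ρ (G a₂ (a₂ - a₁ - 1))) (eB a₂ a₁) ∧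
    Commute (ρ (G a₂ (a₂ - a₁ - 1))) (oB a₂ a₁) ∧
    Commute (ρ (G a₂ (a₂ - a₁ - 1))) (G a₂ (a₁ - 2)) := by
  have hH : ρ (G a₂ (a₂ - a₁ - 1)) ∈ closure (σ a₂ '' Icc (a₁ + 1) (a₂ - 1)) := by
    refine closure_mono ?_ (mem_closure_image_of_antihom ρ hmul hone (G_mem_closure a₂ _))
    rintro _ ⟨_, ⟨i, ⟨hi₁, hi₂⟩, rfl⟩, rfl⟩
    exact ⟨a₂ - i, ⟨by omega, by omega⟩, (hσ i hi₁ (by omega)).symm⟩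
  have hcomm {y} (hy : y ∈ closure (σ a₂ '' Ico 1 a₁)) : Commute (ρ (G a₂ (a₂ - a₁ - 1))) y :=
    (commute_of_mem_closure_σ (by rintro _ ⟨-, hi⟩ _ ⟨hj, -⟩; omega) hy hH).symm
  refine ⟨hcomm (eB_mem_closure a₂ a₁), hcomm (oB_mem_closure a₂ a₁), hcomm ?_⟩
  refine closure_mono (image_mono fun i hi => ?_) (G_mem_closure a₂ (a₁ - 2))
  simp only [Set.mem_Ico, Set.mem_Icc] at hi ⊢
  omega

/-- For `2 ≤ a₁ < a₂` and the π-rotation anti-homomorphism `ρ` of `B_{a₂}`,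
the element `H(a₁,a₂) := ρ(G(a₂ - a₁ - 1))` commutes with each of
`e(a₁)`, `o(a₁)` and `G(a₁ - 2)`. -/
theorem H_commutes (a₁ a₂ : ℕ) (h1 : 2 ≤ a₁) (h12 : a₁ < a₂)
    (ρ : BraidGroup a₂ → BraidGroup a₂)
    (hmul : ∀ x y, ρ (x * y) = ρ y * ρ x) (hone : ρ 1 = 1)
    (hσ : ∀ i, 1 ≤ i → i ≤ a₂ - 1 → ρ (σ a₂ i) = σ a₂ (a₂ - i)) :
    Commute (ρ (G a₂ (a₂ - a₁ - 1))) (eB a₂ a₁) ∧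
    Commute (ρ (G a₂ (a₂ - a₁ - 1))) (oB a₂ a₁) ∧
    Commute (ρ (G a₂ (a₂ - a₁ - 1))) (G a₂ (a₁ - 2)) :=
  H_commutes_general a₁ a₂ ρ hmul hone hσ
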